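/- If 1/2 < q < 1 and p(0) < 1, then the level winning probabilities strictly increase with the level: p_h < p_{h+1} for every 0 ≤ h ≤ N−1. -/

import Mathlib

/-!
`F = pgf p ∘ mix q`, where `mix q x = q x + (1 - q)(1 - x)`. On `[0, 1]` both factors map into
`[0, 1]` and are strictly increasing: `mix q` because `q > 1/2`, `pgf p` because `p` has mass at
some `k ≠ 0`. Moreover `F 1 = pgf p q < pgf p 1 = 1`. A strictly increasing self-map `f` with
`f a < a` makes the backward orbit `a, f a, f (f a), …` strictly decreasing, by downward induction.
-/

open Set

theorem lt_succ_of_backward_orbit {α : Type*} [Preorder α] {s : Set α} {f : α → α} {a : α}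
    (hmaps : MapsTo f s s) (hmono : StrictMonoOn f s) (ha : a ∈ s) (hfa : f a < a)
    {N : ℕ} {P : ℕ → α} (hPN : P N = a) (hPrec : ∀ h, h < N → P h = f (P (h + 1))) :
    ∀ h, h < N → P h < P (h + 1) := by
  have hmem : ∀ h, h ≤ N → P h ∈ s := by
    intro h hh
    induction hh using Nat.decreasingInduction with
    | self => exact hPN ▸ ha
    | of_succ k hk ih => exact hPrec k hk ▸ hmaps ih
  intro h hh
  induction hh.le using Nat.decreasingInduction with
  | self => exact absurd hh (lt_irrefl N)
  | of_succ k hk ih =>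
    rw [hPrec k hk]
    rcases (show k + 1 ≤ N from hk).eq_or_lt with hN | hN
    · rw [hN, hPN]
      exact hfa
    · conv_rhs => rw [hPrec (k + 1) hN]
      exact hmono (hmem _ hN.le) (hmem _ hN) (ih hN)

section GeneratingFunction

variable {p : ℕ → ℝ}

noncomputable def pgf (p : ℕ → ℝ) (t : ℝ) : ℝ := ∑' k, t ^ k * p k

lemma pow_mul_le_of_mem_Icc (hp : ∀ k, 0 ≤ p k) {t : ℝ} (ht : t ∈ Icc (0 : ℝ) 1) (k : ℕ) :
    t ^ k * p k ≤ p k :=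
  mul_le_of_le_one_left (hp k) (pow_le_one₀ ht.1 ht.2)

lemma summable_pow_mul (hp : ∀ k, 0 ≤ p k) (hsum : Summable p) {t : ℝ}
    (ht : t ∈ Icc (0 : ℝ) 1) : Summable fun k => t ^ k * p k :=
  .of_nonneg_of_le (fun k => mul_nonneg (pow_nonneg ht.1 k) (hp k))
    (pow_mul_le_of_mem_Icc hp ht) hsum

lemma pgf_one (hpsum : HasSum p 1) : pgf p 1 = 1 := by
  simpa [pgf] using hpsum.tsum_eq

lemma mapsTo_pgf_Icc (hp : ∀ k, 0 ≤ p k) (hpsum : HasSum p 1) :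
    MapsTo (pgf p) (Icc 0 1) (Icc 0 1) := fun _ ht =>
  ⟨tsum_nonneg fun k => mul_nonneg (pow_nonneg ht.1 k) (hp k),
    hpsum.tsum_eq ▸ (summable_pow_mul hp hpsum.summable ht).tsum_le_tsum
      (pow_mul_le_of_mem_Icc hp ht) hpsum.summable⟩

lemma strictMonoOn_pgf (hp : ∀ k, 0 ≤ p k) (hsum : Summable p) {k₀ : ℕ} (hk₀ : k₀ ≠ 0)
    (hpk₀ : 0 < p k₀) : StrictMonoOn (pgf p) (Icc 0 1) := fun _ hs _ ht hst =>
  Summable.tsum_lt_tsum (i := k₀)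
    (fun k => mul_le_mul_of_nonneg_right (pow_le_pow_left₀ hs.1 hst.le k) (hp k))
    (mul_lt_mul_of_pos_right (pow_lt_pow_left₀ hst hs.1 hk₀) hpk₀)
    (summable_pow_mul hp hsum hs) (summable_pow_mul hp hsum ht)

lemma exists_ne_zero_pos_of_lt_one (hp : ∀ k, 0 ≤ p k) (hpsum : HasSum p 1) (hp0 : p 0 < 1) :
    ∃ k, k ≠ 0 ∧ 0 < p k := by
  by_contra! hle
  have hsum_eq : ∑' k, p k = p 0 :=
    tsum_eq_single 0 fun k hk => le_antisymm (hle k hk) (hp k)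
  exact hp0.ne (hsum_eq ▸ hpsum.tsum_eq)

end GeneratingFunction

def mix (q x : ℝ) : ℝ := q * x + (1 - q) * (1 - x)

lemma mapsTo_mix_Icc {q : ℝ} (hq0 : 0 ≤ q) (hq1 : q ≤ 1) : MapsTo (mix q) (Icc 0 1) (Icc 0 1) :=
  fun x hx => by unfold mix; constructor <;> nlinarith [hx.1, hx.2]

lemma strictMono_mix {q : ℝ} (hq : 1 / 2 < q) : StrictMono (mix q) :=
  fun x y hxy => by unfold mix; nlinarith

theorem stmt_6_general (q : ℝ) (hq0 : 0 ≤ q) (hq1 : q ≤ 1)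
    (p : ℕ → ℝ) (hp : ∀ k, 0 ≤ p k) (hpsum : HasSum p 1)
    (F : ℝ → ℝ)
    (hF : ∀ x : ℝ, F x = ∑' k : ℕ, (q * x + (1 - q) * (1 - x)) ^ k * p k)
    (N : ℕ)
    (P : ℕ → ℝ) (hPN : P N = 1) (hPrec : ∀ h, h < N → P h = F (P (h + 1)))
    (hqlo : 1 / 2 < q) (hqhi : q < 1) (hp0 : p 0 < 1) :
    ∀ h, h < N → P h < P (h + 1) := by
  obtain rfl : F = pgf p ∘ mix q := funext hF
  obtain ⟨k₀, hk₀, hpk₀⟩ := exists_ne_zero_pos_of_lt_one hp hpsum hp0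
  have hmix_maps := mapsTo_mix_Icc hq0 hq1
  have hpgf_mono := strictMonoOn_pgf hp hpsum.summable hk₀ hpk₀
  have hF_one : pgf p (mix q 1) < 1 := by
    calc pgf p (mix q 1) = pgf p q := by simp [mix]
      _ < pgf p 1 := hpgf_mono ⟨hq0, hq1⟩ (right_mem_Icc.2 zero_le_one) hqhi
      _ = 1 := pgf_one hpsum
  exact lt_succ_of_backward_orbit ((mapsTo_pgf_Icc hp hpsum).comp hmix_maps)
    (hpgf_mono.comp ((strictMono_mix hqlo).strictMonoOn _) hmix_maps)
    (right_mem_Icc.2 zero_le_one) hF_one hPN hPrec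

theorem stmt_6 (q : ℝ) (hq0 : 0 ≤ q) (hq1 : q ≤ 1)
    (p : ℕ → ℝ) (hp : ∀ k, 0 ≤ p k) (hpsum : HasSum p 1)
    (F : ℝ → ℝ)
    (hF : ∀ x : ℝ, F x = ∑' k : ℕ, (q * x + (1 - q) * (1 - x)) ^ k * p k)
    (N : ℕ) (hN : 1 ≤ N)
    (P : ℕ → ℝ) (hPN : P N = 1) (hPrec : ∀ h, h < N → P h = F (P (h + 1)))
    (hqlo : 1 / 2 < q) (hqhi : q < 1) (hp0 : p 0 < 1) :
    ∀ h, h < N → P h < P (h + 1) :=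
  stmt_6_general q hq0 hq1 p hp hpsum F hF N P hPN hPrec hqlo hqhi hp0
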